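/- arXiv:2405.18712 — 2 statements merged into one kernel-verified Lean document; each statement's English description precedes it below -/
import Mathlib

section
/- Let D_k = I_N ⊗ A − C_k ⊗ I_n for k = 0,…,M−1, where A ∈ ℝ^{n×n} and C_k ∈ ℝ^{N×N}. Then the monodromy matrix R = ∏_{k=0}^{M−1} exp(τ D_k) factors as R = (∏_{k=0}^{M−1} exp(−τ C_k)) ⊗ exp(Mτ A), and hence ρ(R) = ρ(∏_k exp(−τ C_k)) · ρ(exp(Mτ A)). -/
/-!
Since `I_N ⊗ A` and `C_k ⊗ I_n` commute, `exp (τ D_k) = exp (-τ C_k) ⊗ exp (τ A)`, and the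
mixed-product rule `(P ⊗ Q)(P' ⊗ Q') = PP' ⊗ QQ'` collects the `M` factors into
`(∏ exp (-τ C_k)) ⊗ exp (τ A) ^ M`. For the spectral radii, the `L^∞` operator norm is
multiplicative on Kronecker products, so Gelfand's formula `ρ(X) = lim ‖X^k‖^(1/k)` turns
`(X ⊗ Y)^k = X^k ⊗ Y^k` into `ρ(X ⊗ Y) = ρ(X) ρ(Y)`.
-/

open Matrix Kronecker

namespace spectrum

theorem spectralRadius_ne_top {𝕜 A : Type*} [NormedField 𝕜] [NormedRing A] [NormedAlgebra 𝕜 A]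
    [CompleteSpace A] (a : A) : spectralRadius 𝕜 a ≠ ⊤ :=
  ((spectralRadius_le_pow_nnnorm_pow_one_div 𝕜 a 0).trans_lt (by simp [ENNReal.mul_lt_top])).ne

theorem spectralRadius_eq_mul_of_nnnorm_pow_eq {A B C : Type*} [NormedRing A]
    [NormedAlgebra ℂ A] [CompleteSpace A] [NormedRing B] [NormedAlgebra ℂ B] [CompleteSpace B]
    [NormedRing C] [NormedAlgebra ℂ C] [CompleteSpace C] {a : A} {b : B} {c : C}
    (h : ∀ k : ℕ, ‖c ^ k‖₊ = ‖a ^ k‖₊ * ‖b ^ k‖₊) :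
    spectralRadius ℂ c = spectralRadius ℂ a * spectralRadius ℂ b := by
  have hc := pow_nnnorm_pow_one_div_tendsto_nhds_spectralRadius c
  simp only [h, ENNReal.coe_mul,
    ENNReal.mul_rpow_of_nonneg _ _ (one_div_nonneg.2 (Nat.cast_nonneg _))] at hc
  exact tendsto_nhds_unique hc <| ENNReal.Tendsto.mul
    (pow_nnnorm_pow_one_div_tendsto_nhds_spectralRadius a) (.inr (spectralRadius_ne_top b))
    (pow_nnnorm_pow_one_div_tendsto_nhds_spectralRadius b) (.inr (spectralRadius_ne_top a))

end spectrum

namespace Matrix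

open NormedSpace

variable {l m α : Type*}

theorem map_kronecker {l' m' β : Type*} [Mul α] [Mul β] (f : α → β)
    (hf : ∀ a b, f (a * b) = f a * f b) (X : Matrix l l' α) (Y : Matrix m m' α) :
    (X ⊗ₖ Y).map f = X.map f ⊗ₖ Y.map f :=
  ext fun _ _ => hf _ _

theorem _root_.Continuous.matrix_kronecker {X l' m' : Type*} [TopologicalSpace X]
    [TopologicalSpace α] [Mul α] [ContinuousMul α] {A : X → Matrix l l' α}
    {B : X → Matrix m m' α} (hA : Continuous A) (hB : Continuous B) :
    Continuous fun x => A x ⊗ₖ B x :=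
  continuous_matrix fun _ _ => (hA.matrix_elem _ _).mul (hB.matrix_elem _ _)

section LinftyOp

open scoped Matrix.Norms.Operator

theorem linfty_opNNNorm_kronecker [Fintype l] [Fintype m] {l' m' : Type*} [Fintype l']
    [Fintype m'] [SeminormedCommRing α] [NormMulClass α] (X : Matrix l l' α)
    (Y : Matrix m m' α) : ‖X ⊗ₖ Y‖₊ = ‖X‖₊ * ‖Y‖₊ := by
  have hrow : ∀ i : l × m, ∑ j : l' × m', ‖(X ⊗ₖ Y) i j‖₊ =
      (∑ j, ‖X i.1 j‖₊) * ∑ q, ‖Y i.2 q‖₊ := fun i => by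
    simp only [Fintype.sum_prod_type, Finset.sum_mul_sum, kroneckerMap_apply, nnnorm_mul]
  rw [linfty_opNNNorm_def, linfty_opNNNorm_def, linfty_opNNNorm_def]
  simp only [hrow]
  rw [← Finset.univ_product_univ, Finset.sup_product_left, NNReal.finset_sup_mul]
  simp only [NNReal.mul_finset_sup]

end LinftyOp

variable [Fintype l] [DecidableEq l] [Fintype m] [DecidableEq m]

section Kronecker

variable [CommSemiring α]

def oneKroneckerRingHom : Matrix m m α →+* Matrix (l × m) (l × m) α where
  toFun B := (1 : Matrix l l α) ⊗ₖ B
  map_one' := one_kronecker_one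
  map_mul' B B' := by rw [← mul_kronecker_mul, one_mul]
  map_zero' := kronecker_zero _
  map_add' := kronecker_add _

def kroneckerOneRingHom : Matrix l l α →+* Matrix (l × m) (l × m) α where
  toFun E := E ⊗ₖ (1 : Matrix m m α)
  map_one' := one_kronecker_one
  map_mul' E E' := by rw [← mul_kronecker_mul, one_mul]
  map_zero' := zero_kronecker _
  map_add' E E' := add_kronecker E E' _

theorem commute_one_kronecker_kronecker_one (E : Matrix l l α) (B : Matrix m m α) :
    Commute ((1 : Matrix l l α) ⊗ₖ B) (E ⊗ₖ (1 : Matrix m m α)) := by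
  simp only [Commute, SemiconjBy, ← mul_kronecker_mul, one_mul, mul_one]

theorem list_prod_map_kronecker {ι : Type*} (L : List ι) (f : ι → Matrix l l α)
    (g : ι → Matrix m m α) :
    (L.map fun i => f i ⊗ₖ g i).prod = (L.map f).prod ⊗ₖ (L.map g).prod := by
  induction L with
  | nil => simp
  | cons i L ih => simp only [List.map_cons, List.prod_cons, ih, mul_kronecker_mul]

theorem kronecker_pow (X : Matrix l l α) (Y : Matrix m m α) (k : ℕ) :
    (X ⊗ₖ Y) ^ k = (X ^ k) ⊗ₖ (Y ^ k) := by
  simpa using list_prod_map_kronecker (List.replicate k ()) (fun _ => X) (fun _ => Y)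

end Kronecker

section Exp

variable [NormedCommRing α] [NormedAlgebra ℚ α] [CompleteSpace α]

theorem map_exp_of_continuous {n : Type*} [Fintype n] [DecidableEq n]
    {F : Type*} [FunLike F (Matrix m m α) (Matrix n n α)] [RingHomClass F _ _] (f : F)
    (hf : Continuous f) (B : Matrix m m α) : f (exp B) = exp (f B) := by
  let _ : NormedRing (Matrix m m α) := Matrix.linftyOpNormedRing
  let _ : NormedAlgebra ℚ (Matrix m m α) := Matrix.linftyOpNormedAlgebra
  let _ : NormedRing (Matrix n n α) := Matrix.linftyOpNormedRing
  -- the operator norm's uniformity is the product one only after unfolding instances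
  have hcomplete : @CompleteSpace (Matrix m m α) PseudoMetricSpace.toUniformSpace := by
    exact (inferInstance : CompleteSpace (Matrix m m α))
  exact @NormedSpace.map_exp _ _ _ _ hcomplete _ _ _ _ _ f hf B

theorem exp_one_kronecker (B : Matrix m m α) :
    exp ((1 : Matrix l l α) ⊗ₖ B) = 1 ⊗ₖ exp B :=
  (map_exp_of_continuous oneKroneckerRingHom (continuous_const.matrix_kronecker continuous_id)
    B).symm

theorem exp_kronecker_one (E : Matrix l l α) :
    exp (E ⊗ₖ (1 : Matrix m m α)) = exp E ⊗ₖ 1 :=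
  (map_exp_of_continuous kroneckerOneRingHom (continuous_id.matrix_kronecker continuous_const)
    E).symm

theorem exp_one_kronecker_add_kronecker_one (E : Matrix l l α) (B : Matrix m m α) :
    exp ((1 : Matrix l l α) ⊗ₖ B + E ⊗ₖ (1 : Matrix m m α)) = exp E ⊗ₖ exp B := by
  rw [exp_add_of_commute _ _ (commute_one_kronecker_kronecker_one E B), exp_one_kronecker,
    exp_kronecker_one, ← mul_kronecker_mul, one_mul, mul_one]

theorem exp_smul_one_kronecker_sub_kronecker_one (τ : α) (E : Matrix l l α)
    (B : Matrix m m α) :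
    exp (τ • ((1 : Matrix l l α) ⊗ₖ B - E ⊗ₖ (1 : Matrix m m α))) =
      exp ((-τ) • E) ⊗ₖ exp (τ • B) := by
  rw [← exp_one_kronecker_add_kronecker_one, smul_sub, kronecker_smul, smul_kronecker,
    neg_smul, sub_eq_add_neg]

end Exp

theorem spectralRadius_kronecker (X : Matrix l l ℂ) (Y : Matrix m m ℂ) :
    spectralRadius ℂ (X ⊗ₖ Y) = spectralRadius ℂ X * spectralRadius ℂ Y :=
  open scoped Matrix.Norms.Operator in
  spectrum.spectralRadius_eq_mul_of_nnnorm_pow_eq fun k => by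
    rw [kronecker_pow, linfty_opNNNorm_kronecker]

end Matrix

theorem monodromy_kronecker_factorization_general {N n : ℕ} (M : ℕ) (τ : ℝ)
    (A : Matrix (Fin n) (Fin n) ℝ) (C : ℕ → Matrix (Fin N) (Fin N) ℝ)
    (D : ℕ → Matrix (Fin N × Fin n) (Fin N × Fin n) ℝ)
    (hD : ∀ k, D k = (1 : Matrix (Fin N) (Fin N) ℝ) ⊗ₖ A -
        C k ⊗ₖ (1 : Matrix (Fin n) (Fin n) ℝ))
    (R : Matrix (Fin N × Fin n) (Fin N × Fin n) ℝ)
    (hR : R = (((List.range M).reverse.map fun k => NormedSpace.exp (τ • D k)).prod)) :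
    R = (((List.range M).reverse.map fun k => NormedSpace.exp ((-τ) • C k)).prod) ⊗ₖ
          NormedSpace.exp (((M : ℝ) * τ) • A) ∧
      spectralRadius ℂ (R.map (Complex.ofReal)) =
        spectralRadius ℂ
            (((((List.range M).reverse.map fun k =>
                NormedSpace.exp ((-τ) • C k)).prod)).map (Complex.ofReal)) *
          spectralRadius ℂ ((NormedSpace.exp (((M : ℝ) * τ) • A)).map (Complex.ofReal)) := by
  have hfactor : R = (((List.range M).reverse.map fun k => NormedSpace.exp ((-τ) • C k)).prod) ⊗ₖ
      NormedSpace.exp (((M : ℝ) * τ) • A) := by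
    simp only [hR, hD, exp_smul_one_kronecker_sub_kronecker_one, list_prod_map_kronecker,
      List.map_const', List.prod_replicate, List.length_reverse, List.length_range,
      ← Matrix.exp_nsmul, ← Nat.cast_smul_eq_nsmul ℝ, smul_smul]
  refine ⟨hfactor, ?_⟩
  rw [hfactor, map_kronecker _ Complex.ofReal_mul, spectralRadius_kronecker]

/-- For `D_k = I_N ⊗ A − C_k ⊗ I_n`, the monodromy matrix
`R = exp (τ D_{M-1}) ⋯ exp (τ D_0)` factors as
`R = (exp (−τ C_{M-1}) ⋯ exp (−τ C_0)) ⊗ exp (M τ A)`, and consequently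
`ρ(R) = ρ(∏ₖ exp (−τ C_k)) * ρ(exp (M τ A))`. -/
theorem monodromy_kronecker_factorization {N n : ℕ} (M : ℕ) (τ : ℝ) (hτ : 0 < τ)
    (A : Matrix (Fin n) (Fin n) ℝ) (C : ℕ → Matrix (Fin N) (Fin N) ℝ)
    (D : ℕ → Matrix (Fin N × Fin n) (Fin N × Fin n) ℝ)
    (hD : ∀ k, D k = (1 : Matrix (Fin N) (Fin N) ℝ) ⊗ₖ A -
        C k ⊗ₖ (1 : Matrix (Fin n) (Fin n) ℝ))
    (R : Matrix (Fin N × Fin n) (Fin N × Fin n) ℝ)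
    (hR : R = (((List.range M).reverse.map fun k => NormedSpace.exp (τ • D k)).prod)) :
    R = (((List.range M).reverse.map fun k => NormedSpace.exp ((-τ) • C k)).prod) ⊗ₖ
          NormedSpace.exp (((M : ℝ) * τ) • A) ∧
      spectralRadius ℂ (R.map (Complex.ofReal)) =
        spectralRadius ℂ
            (((((List.range M).reverse.map fun k =>
                NormedSpace.exp ((-τ) • C k)).prod)).map (Complex.ofReal)) *
          spectralRadius ℂ ((NormedSpace.exp (((M : ℝ) * τ) • A)).map (Complex.ofReal)) :=
  monodromy_kronecker_factorization_general M τ A C D hD R hR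
end

section
/- Let D_0,…,D_{M−1} ∈ ℝ^{n×n} with ‖D_k‖ ≤ d for all k, τ > 0 and T = Mτ. Then ‖∏_{k=0}^{M−1} exp(τ D_k) − exp(τ ∑_{k=0}^{M−1} D_k)‖ ≤ 2(e^{dT} − 1 − dT). -/
/-!
Write `φ(t) = eᵗ - 1 - t`. For a submultiplicative seminorm `p` and `p xᵢ ≤ bᵢ`, both
`∏ exp xᵢ` and `exp (∑ xᵢ)` equal `1 + ∑ xᵢ` up to a remainder of `p`-size at most `φ(∑ bᵢ)`.
For one exponential this is a termwise comparison of its series with that of `e^b`. The bound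
survives products because `EF - 1 - (x + y) = (E - 1 - x) + (F - 1 - y) + (E - 1)(F - 1)`
while `φ(b + c) = φ(b) + φ(c) + (eᵇ - 1)(eᶜ - 1)`.
-/

open NormedSpace Finset
open scoped Nat

namespace Seminorm

section Ring

variable {𝔸 : Type*} [Ring 𝔸] [Module ℝ 𝔸] (p : Seminorm ℝ 𝔸)

theorem apply_pow_le (hmul : ∀ x y, p (x * y) ≤ p x * p y) (x : 𝔸) {k : ℕ} (hk : k ≠ 0) :
    p (x ^ k) ≤ p x ^ k := by
  obtain ⟨k, rfl⟩ := Nat.exists_eq_succ_of_ne_zero hk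
  induction k with
  | zero => simp
  | succ k ih =>
    rw [pow_succ, pow_succ _ (k + 1)]
    exact (hmul _ _).trans (mul_le_mul_of_nonneg_right (ih k.succ_ne_zero) (apply_nonneg p x))

def ExpRemainderLE (E x : 𝔸) (b : ℝ) : Prop :=
  p (E - 1) ≤ Real.exp b - 1 ∧ p (E - 1 - x) ≤ Real.exp b - 1 - b

theorem expRemainderLE_one : p.ExpRemainderLE 1 0 0 := by
  simp [ExpRemainderLE]

theorem ExpRemainderLE.mul (hmul : ∀ x y, p (x * y) ≤ p x * p y) {E F x y : 𝔸} {b c : ℝ}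
    (hE : p.ExpRemainderLE E x b) (hF : p.ExpRemainderLE F y c) :
    p.ExpRemainderLE (E * F) (x + y) (b + c) := by
  have hcross : p ((E - 1) * (F - 1)) ≤ (Real.exp b - 1) * (Real.exp c - 1) :=
    (hmul _ _).trans (mul_le_mul hE.1 hF.1 (apply_nonneg _ _) ((apply_nonneg _ _).trans hE.1))
  have e1 : E * F - 1 = (E - 1) * (F - 1) + (E - 1) + (F - 1) := by noncomm_ring
  have e2 : E * F - 1 - (x + y) = (E - 1) * (F - 1) + (E - 1 - x) + (F - 1 - y) := by
    noncomm_ring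
  rw [ExpRemainderLE, e2, e1, Real.exp_add]
  constructor
  · grw [map_add_le_add, map_add_le_add, hcross, hE.1, hF.1]
    linarith
  · grw [map_add_le_add, map_add_le_add, hcross, hE.2, hF.2]
    linarith

theorem ExpRemainderLE.list_prod (hmul : ∀ x y, p (x * y) ≤ p x * p y) {ι : Type*}
    {E x : ι → 𝔸} {b : ι → ℝ} (L : List ι) (h : ∀ i ∈ L, p.ExpRemainderLE (E i) (x i) (b i)) :
    p.ExpRemainderLE (L.map E).prod (L.map x).sum (L.map b).sum := by
  induction L with
  | nil => exact p.expRemainderLE_one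
  | cons i L ih =>
    simp only [List.map_cons, List.prod_cons, List.sum_cons]
    exact (h i List.mem_cons_self).mul p hmul (ih fun j hj => h j (List.mem_cons_of_mem i hj))

end Ring

section Topological

variable {E : Type*} [AddCommGroup E] [Module ℝ E] [TopologicalSpace E] (p : Seminorm ℝ E)

theorem apply_le_of_hasSum (hp : Continuous p) {f : ℕ → E} {g : ℕ → ℝ} {a : E} {c : ℝ}
    (hf : HasSum f a) (hg : HasSum g c) (hfg : ∀ k, p (f k) ≤ g k) : p a ≤ c :=
  le_of_tendsto_of_tendsto' ((hp.tendsto a).comp hf.tendsto_sum_nat) hg.tendsto_sum_nat fun _ =>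
    (le_sum_of_subadditive p (map_zero p).le (map_add_le_add p) _ _).trans
      (sum_le_sum fun k _ => hfg k)

end Topological

section NormedAlgebra

variable {𝔸 : Type*} [NormedRing 𝔸] [NormedAlgebra ℝ 𝔸] [CompleteSpace 𝔸] (p : Seminorm ℝ 𝔸)

theorem apply_exp_sub_sum_range_le (hp : Continuous p) (hmul : ∀ x y, p (x * y) ≤ p x * p y)
    {x : 𝔸} {b : ℝ} (hx : p x ≤ b) {m : ℕ} (hm : m ≠ 0) :
    p (exp x - ∑ k ∈ range m, (k !⁻¹ : ℝ) • x ^ k) ≤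
      Real.exp b - ∑ k ∈ range m, b ^ k / k ! := by
  refine p.apply_le_of_hasSum hp ((hasSum_nat_add_iff' m).mpr (exp_series_hasSum_exp' x))
    ((hasSum_nat_add_iff' m).mpr (Real.exp_eq_exp_ℝ ▸ expSeries_div_hasSum_exp b)) fun k => ?_
  have hpow := p.apply_pow_le hmul x (k := k + m) (by omega)
  rw [map_smul_eq_mul, Real.norm_of_nonneg (by positivity), div_eq_inv_mul]
  gcongr
  exact hpow.trans (pow_le_pow_left₀ (apply_nonneg p x) hx _)

theorem expRemainderLE_exp (hp : Continuous p) (hmul : ∀ x y, p (x * y) ≤ p x * p y)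
    {x : 𝔸} {b : ℝ} (hx : p x ≤ b) : p.ExpRemainderLE (exp x) x b := by
  have h1 := p.apply_exp_sub_sum_range_le hp hmul hx one_ne_zero
  have h2 := p.apply_exp_sub_sum_range_le hp hmul hx two_ne_zero
  norm_num [sum_range_succ] at h1 h2
  exact ⟨h1, by simpa only [sub_sub] using h2⟩

theorem apply_list_prod_exp_sub_exp_sum_le (hp : Continuous p)
    (hmul : ∀ x y, p (x * y) ≤ p x * p y) {ι : Type*} {x : ι → 𝔸} {b : ι → ℝ} (L : List ι)
    (hx : ∀ i ∈ L, p (x i) ≤ b i) :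
    p ((L.map fun i => exp (x i)).prod - exp (L.map x).sum) ≤
      2 * (Real.exp (L.map b).sum - 1 - (L.map b).sum) := by
  have hsum : p (L.map x).sum ≤ (L.map b).sum := by
    grw [List.le_sum_of_subadditive p (map_zero p).le (map_add_le_add p), List.map_map]
    exact List.sum_le_sum fun i hi => hx i hi
  have hprod := (ExpRemainderLE.list_prod p hmul L fun i hi =>
    p.expRemainderLE_exp hp hmul (hx i hi)).2
  have hexp := (p.expRemainderLE_exp hp hmul hsum).2
  calc p ((L.map fun i => exp (x i)).prod - exp (L.map x).sum)
      = p (((L.map fun i => exp (x i)).prod - 1 - (L.map x).sum) -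
          (exp (L.map x).sum - 1 - (L.map x).sum)) := by congr 1; abel
    _ ≤ _ := map_sub_le_add p _ _
    _ ≤ _ := by linarith

end NormedAlgebra

end Seminorm

theorem prod_exp_sub_exp_sum_bound_general {n : ℕ} (M : ℕ) (τ T d : ℝ) (hτ : 0 < τ)
    (hT : T = M * τ)
    (D : ℕ → Matrix (Fin n) (Fin n) ℝ)
    (ν : Matrix (Fin n) (Fin n) ℝ → ℝ)
    (hadd : ∀ A B, ν (A + B) ≤ ν A + ν B)
    (hsmul : ∀ (c : ℝ) A, ν (c • A) = |c| * ν A)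
    (hmul : ∀ A B, ν (A * B) ≤ ν A * ν B)
    (hDd : ∀ k < M, ν (D k) ≤ d) :
    ν ((((List.range M).reverse.map fun k => NormedSpace.exp (τ • D k)).prod) -
        NormedSpace.exp (τ • ∑ k ∈ Finset.range M, D k)) ≤
      2 * (Real.exp (d * T) - 1 - d * T) := by
  -- Any complete normed-algebra structure will do; it only makes the exponential series converge.
  let := Matrix.linftyOpNormedRing (n := Fin n) (α := ℝ)
  let := Matrix.linftyOpNormedAlgebra (n := Fin n) (R := ℝ) (α := ℝ)
  let p : Seminorm ℝ (Matrix (Fin n) (Fin n) ℝ) := Seminorm.of ν hadd hsmul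
  have hp : Continuous p := p.convexOn.locallyLipschitz.continuous
  have hx : ∀ k ∈ (List.range M).reverse, p (τ • D k) ≤ τ * d := fun k hk => by
    rw [map_smul_eq_mul, Real.norm_of_nonneg hτ.le]
    exact mul_le_mul_of_nonneg_left (hDd k (List.mem_range.mp (List.mem_reverse.mp hk))) hτ.le
  have hsum : ((List.range M).reverse.map fun k => τ • D k).sum = τ • ∑ k ∈ range M, D k := by
    rw [List.map_reverse, List.sum_reverse, smul_sum, sum_eq_multiset_sum, range_val,
      Multiset.range, Multiset.map_coe, Multiset.sum_coe]
  have hb : ((List.range M).reverse.map fun _ => τ * d).sum = d * T := by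
    simp only [List.map_const', List.sum_replicate, List.length_reverse, List.length_range,
      nsmul_eq_mul, hT]
    ring
  have key := p.apply_list_prod_exp_sub_exp_sum_le hp hmul _ hx
  rwa [hsum, hb] at key

/-- If `‖D_k‖ ≤ d` for all `k` and `T = Mτ`, then the ordered product of the `exp (τ D_k)`
differs from `exp (τ ∑ₖ D_k)` by at most `2 (e^{dT} − 1 − dT)` in any submultiplicative
matrix norm. -/
theorem prod_exp_sub_exp_sum_bound {n : ℕ} (M : ℕ) (τ T d : ℝ) (hτ : 0 < τ)
    (hd : 0 ≤ d) (hT : T = M * τ)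
    (D : ℕ → Matrix (Fin n) (Fin n) ℝ)
    (ν : Matrix (Fin n) (Fin n) ℝ → ℝ)
    (hnonneg : ∀ A, 0 ≤ ν A)
    (hzero : ∀ A, ν A = 0 ↔ A = 0)
    (hadd : ∀ A B, ν (A + B) ≤ ν A + ν B)
    (hsmul : ∀ (c : ℝ) A, ν (c • A) = |c| * ν A)
    (hmul : ∀ A B, ν (A * B) ≤ ν A * ν B)
    (hDd : ∀ k < M, ν (D k) ≤ d) :
    ν ((((List.range M).reverse.map fun k => NormedSpace.exp (τ • D k)).prod) -
        NormedSpace.exp (τ • ∑ k ∈ Finset.range M, D k)) ≤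
      2 * (Real.exp (d * T) - 1 - d * T) :=
  prod_exp_sub_exp_sum_bound_general M τ T d hτ hT D ν hadd hsmul hmul hDd
end
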